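/- Let q be a prime power and let c, m be positive integers. For every function f assigning to each point a ∈ F_q^m and each vector i of nonnegative integers with wt(i) < c an element f(a, i) ∈ F_q, there exists a polynomial P ∈ F_q[X_1,...,X_m] of total degree at most (c+m)·q such that P^{(i)}(a) = f(a, i) for every a ∈ F_q^m and every i with wt(i) < c. -/

import Mathlib

/-!
Evaluating the Hasse derivative `P^{(i)}` at `a` is reading off the coefficient of `X^i` in the
Taylor shift `P(X + a)`. Over `F_q` the polynomial `X_k - X_k^q` is invariant under every shift
(Frobenius fixes `a`), so `B_u = ∏ (X_k - X_k^q)^{u_k}` is divisible by `X^u` after any shift,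
with cofactor of constant term `1`. Hence adding `Q · B_u` with `wt(u) = c` leaves all Taylor
coefficients of weight `< c` and all other ones of weight `c` unchanged, and changes the
coefficient of `X^u` at `a` by `Q(a)`. Choosing each `Q` by Lagrange interpolation on `F_q^m`
corrects the weight-`c` data everywhere; inducting on `c` costs degree `q` per step.
-/

/-- The Hasse derivative of a multivariate polynomial `P` with respect to the index
vector `i : Fin m → ℕ`: the coefficient of `Z^i` in `P(X + Z)`. -/
noncomputable def mvHasseDeriv {F : Type*} [CommSemiring F] {m : ℕ}
    (i : Fin m → ℕ) (P : MvPolynomial (Fin m) F) : MvPolynomial (Fin m) F :=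
  MvPolynomial.coeff (Finsupp.equivFunOnFinite.symm i)
    (MvPolynomial.eval₂ (MvPolynomial.C.comp MvPolynomial.C)
      (fun k => MvPolynomial.C (MvPolynomial.X k) + MvPolynomial.X k) P)

/-- The multiplicity of `P` at a point `a`: the largest `M` (possibly `⊤`) such that
all Hasse derivatives of `P` of weight `< M` vanish at `a`. -/
noncomputable def mvMult {F : Type*} [CommSemiring F] {m : ℕ}
    (P : MvPolynomial (Fin m) F) (a : Fin m → F) : ℕ∞ :=
  sSup {M : ℕ∞ | ∀ i : Fin m → ℕ, ((∑ k, i k : ℕ) : ℕ∞) < M →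
    MvPolynomial.eval a (mvHasseDeriv i P) = 0}

open MvPolynomial Finset

theorem Finsupp.eq_of_le_of_degree_le {σ : Type*} {u d : σ →₀ ℕ} (h : u ≤ d)
    (hd : d.degree ≤ u.degree) : u = d := by
  obtain ⟨e, rfl⟩ := le_iff_exists_add.mp h
  rw [map_add] at hd
  have : e = 0 := (Finsupp.degree_eq_zero_iff e).mp (by omega)
  simp [this]

namespace MvPolynomial

section Taylor

variable {R σ : Type*} [CommSemiring R]

noncomputable def taylor (a : σ → R) : MvPolynomial σ R →ₐ[R] MvPolynomial σ R :=
  aeval fun k => X k + C (a k)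

@[simp]
theorem taylor_X (a : σ → R) (k : σ) : taylor a (X k) = X k + C (a k) :=
  aeval_X _ _

theorem constantCoeff_taylor (a : σ → R) (p : MvPolynomial σ R) :
    constantCoeff (taylor a p) = eval a p := by
  have : constantCoeff.comp (taylor a).toRingHom = eval a := by
    ext <;> simp
  exact congrArg (· p) this

end Taylor

theorem eval_mvHasseDeriv {F : Type*} [CommSemiring F] {m : ℕ} (a : Fin m → F)
    (i : Fin m → ℕ) (P : MvPolynomial (Fin m) F) :
    eval a (mvHasseDeriv i P) = coeff (Finsupp.equivFunOnFinite.symm i) (taylor a P) := by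
  have : (map (eval a)).comp (eval₂Hom (C.comp C) fun k => C (X k) + X k) =
      (taylor a).toRingHom := by
    ext <;> simp [taylor, add_comm]
  rw [mvHasseDeriv, ← coeff_map, ← coe_eval₂Hom, ← RingHom.comp_apply, this]
  rfl

theorem totalDegree_le_of_mem_restrictDegree {R σ : Type*} [CommSemiring R] [Fintype σ]
    {p : MvPolynomial σ R} {n : ℕ} (hp : p ∈ restrictDegree σ R n) :
    p.totalDegree ≤ Fintype.card σ * n := by
  refine Finset.sup_le fun s hs => ?_
  rw [Finsupp.sum_fintype _ _ fun _ => rfl, ← smul_eq_mul, ← Finset.card_univ, ← Finset.sum_const]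
  exact Finset.sum_le_sum fun i _ => (mem_restrictDegree σ p n).mp hp s hs i

theorem exists_totalDegree_le_eval_eq {K σ : Type*} [Field K] [Fintype K] [Fintype σ]
    (g : (σ → K) → K) :
    ∃ p : MvPolynomial σ K,
      p.totalDegree ≤ Fintype.card σ * (Fintype.card K - 1) ∧ ∀ a, eval a p = g a := by
  obtain ⟨p, hp, hpg⟩ :=
    Submodule.mem_map.mp ((map_restrict_dom_evalₗ K σ).symm ▸ Submodule.mem_top (x := g))
  exact ⟨p, totalDegree_le_of_mem_restrictDegree hp, fun a => congrFun hpg a⟩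

section FiniteField

variable {K σ : Type*} [Field K] [Fintype K]

local notation "q" => Fintype.card K

theorem taylor_X_sub_X_pow_card (a : σ → K) (k : σ) :
    taylor a (X k - X k ^ q) = X k - X k ^ q := by
  have hfrob : (X k + C (a k)) ^ q = X k ^ q + C (a k) := by
    simpa only [FiniteField.frobeniusAlgHom_apply, ← C_pow, FiniteField.pow_card] using
      map_add (FiniteField.frobeniusAlgHom K (MvPolynomial σ K)) (X k) (C (a k))
  rw [map_sub, map_pow, taylor_X, hfrob]
  ring

noncomputable def vanishingProd (u : σ →₀ ℕ) : MvPolynomial σ K :=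
  u.prod fun k e => (X k - X k ^ q) ^ e

theorem taylor_vanishingProd (a : σ → K) (u : σ →₀ ℕ) :
    taylor a (vanishingProd u) = vanishingProd u := by
  simp only [vanishingProd, Finsupp.prod, map_prod, map_pow, taylor_X_sub_X_pow_card]

theorem vanishingProd_eq_mul_monomial (u : σ →₀ ℕ) :
    vanishingProd u = (u.prod fun k e => (1 - X k ^ (q - 1)) ^ e) * monomial u (1 : K) := by
  rw [vanishingProd, monomial_eq, C_1, one_mul, ← Finsupp.prod_mul]
  refine Finsupp.prod_congr fun k _ => ?_
  rw [← mul_pow, sub_mul, one_mul, ← pow_succ, Nat.sub_add_cancel Fintype.card_pos]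

theorem coeff_mul_vanishingProd_self (p : MvPolynomial σ K) (u : σ →₀ ℕ) :
    coeff u (p * vanishingProd u) = constantCoeff p := by
  have hq : q - 1 ≠ 0 := Nat.sub_ne_zero_of_lt Fintype.one_lt_card
  rw [vanishingProd_eq_mul_monomial, ← mul_assoc, coeff_mul_monomial', if_pos le_rfl, tsub_self,
    mul_one, ← constantCoeff_eq, map_mul, Finsupp.prod, map_prod]
  simp [hq]

theorem coeff_mul_vanishingProd_of_ne (p : MvPolynomial σ K) {u d : σ →₀ ℕ} (hud : u ≠ d)
    (hd : d.degree ≤ u.degree) : coeff d (p * vanishingProd u) = 0 := by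
  rw [vanishingProd_eq_mul_monomial, ← mul_assoc, coeff_mul_monomial',
    if_neg fun h => hud (Finsupp.eq_of_le_of_degree_le h hd)]

theorem totalDegree_vanishingProd_le (u : σ →₀ ℕ) :
    (vanishingProd u : MvPolynomial σ K).totalDegree ≤ u.degree * q := by
  rw [vanishingProd, Finsupp.prod, Finsupp.degree_apply, Finset.sum_mul]
  refine (totalDegree_finsetProd _ _).trans (Finset.sum_le_sum fun k _ => ?_)
  refine (totalDegree_pow _ _).trans ?_
  refine Nat.mul_le_mul_left _ ((totalDegree_sub (X k : MvPolynomial σ K) _).trans (max_le ?_ ?_))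
  · rw [totalDegree_X]
    exact Fintype.card_pos
  · simp [totalDegree_X_pow]

theorem exists_coeff_taylor_eq [Fintype σ] (c : ℕ) (f : (σ → K) → (σ →₀ ℕ) → K) :
    ∃ P : MvPolynomial σ K, P.totalDegree ≤ (c + Fintype.card σ) * q ∧
      ∀ a d, d.degree < c → coeff d (taylor a P) = f a d := by
  induction c with
  | zero => exact ⟨0, by simp, fun a d hd => absurd hd (Nat.not_lt_zero _)⟩
  | succ c ih =>
    obtain ⟨P, hPdeg, hP⟩ := ih
    choose Q hQdeg hQ using fun u : σ →₀ ℕ =>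
      exists_totalDegree_le_eval_eq fun a => f a u - coeff u (taylor a P)
    classical
    set S := (Finset.univ : Finset σ).finsuppAntidiag c
    have hS : ∀ u, u ∈ S ↔ u.degree = c := by simp [S, Finsupp.degree_eq_sum]
    refine ⟨P + ∑ u ∈ S, Q u * vanishingProd u, ?_, fun a d hd => ?_⟩
    · refine (totalDegree_add _ _).trans (max_le (hPdeg.trans (by gcongr; omega)) ?_)
      refine (totalDegree_finsetSum _ _).trans (Finset.sup_le fun u hu => ?_)
      refine (totalDegree_mul _ _).trans ?_
      have := Nat.add_le_add (hQdeg u) (totalDegree_vanishingProd_le (K := K) u)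
      rw [(hS u).mp hu] at this
      have := Nat.mul_le_mul_left (Fintype.card σ) (Nat.sub_le q 1)
      nlinarith
    have hterm : ∀ u ∈ S, coeff d (taylor a (Q u * vanishingProd u)) =
        if u = d then f a u - coeff u (taylor a P) else 0 := by
      intro u hu
      rw [map_mul, taylor_vanishingProd]
      split_ifs with hud
      · rw [hud, coeff_mul_vanishingProd_self, constantCoeff_taylor, hQ]
      · exact coeff_mul_vanishingProd_of_ne _ hud (by rw [(hS u).mp hu]; omega)
    rw [map_add, map_sum, coeff_add, coeff_sum, Finset.sum_congr rfl hterm, Finset.sum_ite_eq']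
    rcases (Nat.lt_succ_iff.mp hd).lt_or_eq with hlt | heq
    · rw [if_neg fun h => hlt.ne ((hS d).mp h), add_zero, hP a d hlt]
    · rw [if_pos ((hS d).mpr heq), add_sub_cancel]

end FiniteField

end MvPolynomial

theorem multivariate_hermite_interpolation_general {F : Type*} [Field F] [Fintype F] {m : ℕ}
    (c : ℕ)
    (f : (Fin m → F) → (Fin m → ℕ) → F) :
    ∃ P : MvPolynomial (Fin m) F, P.totalDegree ≤ (c + m) * Fintype.card F ∧
      ∀ (a : Fin m → F) (i : Fin m → ℕ), ∑ k, i k < c →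
        MvPolynomial.eval a (mvHasseDeriv i P) = f a i := by
  obtain ⟨P, hdeg, hP⟩ := exists_coeff_taylor_eq c fun a d => f a d
  refine ⟨P, by simpa using hdeg, fun a i hi => ?_⟩
  rw [eval_mvHasseDeriv, hP a _ (by simpa [Finsupp.degree_eq_sum] using hi)]
  simp

/-- **Multivariate Hermite interpolation with order-`c` data at all points of `F_q^m`.**
For every assignment `f` of field elements to pairs `(a, i)` with `a ∈ F_q^m` and `wt(i) < c`,
there exists `P ∈ F_q[X_1,…,X_m]` of total degree at most `(c+m)·q` such that
`P^{(i)}(a) = f(a, i)` whenever `wt(i) < c`. -/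
theorem multivariate_hermite_interpolation {F : Type*} [Field F] [Fintype F] {m : ℕ}
    (c : ℕ) (hc : 0 < c) (hm : 0 < m)
    (f : (Fin m → F) → (Fin m → ℕ) → F) :
    ∃ P : MvPolynomial (Fin m) F, P.totalDegree ≤ (c + m) * Fintype.card F ∧
      ∀ (a : Fin m → F) (i : Fin m → ℕ), ∑ k, i k < c →
        MvPolynomial.eval a (mvHasseDeriv i P) = f a i :=
  multivariate_hermite_interpolation_general c f
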